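/- If A ⊆ ℕ has gap density λ(A) > 1 (i.e., limsup a_{n+1}/a_n > 1 where A = {a_1 < a_2 < ...}), then d̲̲(A) = 0, i.e., every subset of A having asymptotic density has density 0. -/

import Mathlib

/-!
If `B ⊆ A` has density `x`, then at a gap `a n < a (n + 1)` with `a (n + 1) > c * a n`, `c > 1`,
the counting function of `B` is constant on `[a n, a (n + 1) - 1]`. Comparing the densities at the
two ends gives, in the limit along such gaps, `x ≥ c * x`, so `x = 0`.
-/

open Filter Topology

/-- `cnt A n` = number of elements of `A` in `[1, n]`, as a real number. -/
noncomputable def cnt (A : Set ℕ) (n : ℕ) : ℝ :=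
  ∑ k ∈ Finset.Icc 1 n, A.indicator (fun _ => (1 : ℝ)) k

/-- `A` has asymptotic density `x`. -/
def HasDens (A : Set ℕ) (x : ℝ) : Prop :=
  Filter.Tendsto (fun n => cnt A n / n) Filter.atTop (nhds x)

/-- `lld A` = sup of densities of subsets of `A` having asymptotic density. -/
noncomputable def lld (A : Set ℕ) : ℝ := sSup {x : ℝ | ∃ B ⊆ A, HasDens B x}

/-- `uud A` = inf of densities of supersets of `A` having asymptotic density. -/
noncomputable def uud (A : Set ℕ) : ℝ := sInf {x : ℝ | ∃ C : Set ℕ, A ⊆ C ∧ HasDens C x}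

lemma cnt_nonneg (B : Set ℕ) (n : ℕ) : 0 ≤ cnt B n :=
  Finset.sum_nonneg fun k _ => Set.indicator_nonneg (fun _ _ => zero_le_one) k

lemma cnt_eq_of_forall_notMem {B : Set ℕ} {m n : ℕ} (hmn : m ≤ n)
    (hgap : ∀ k, m < k → k ≤ n → k ∉ B) : cnt B n = cnt B m := by
  have hIoc (j : ℕ) : cnt B j = ∑ k ∈ Finset.Ioc 0 j, B.indicator (fun _ => (1 : ℝ)) k := by
    rw [cnt, ← Finset.Icc_add_one_left_eq_Ioc, zero_add]
  rw [hIoc, hIoc, ← Finset.sum_Ioc_consecutive _ (Nat.zero_le m) hmn, add_eq_left]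
  refine Finset.sum_eq_zero fun k hk => Set.indicator_of_notMem ?_ _
  rw [Finset.mem_Ioc] at hk
  exact hgap k hk.1 hk.2

lemma HasDens.nonneg {B : Set ℕ} {x : ℝ} (hB : HasDens B x) : 0 ≤ x :=
  ge_of_tendsto hB <| Eventually.of_forall fun n => div_nonneg (cnt_nonneg B n) n.cast_nonneg

lemma hasDens_empty : HasDens ∅ 0 := by
  simp [HasDens, cnt]

lemma HasDens.eq_zero_of_gaps {ι : Type*} {l : Filter ι} [l.NeBot] {B : Set ℕ} {x c : ℝ}
    (hB : HasDens B x) (hc : 1 < c) {p q : ι → ℕ} (hp : Tendsto p l atTop)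
    (hgap : ∀ᶠ i in l, c * p i ≤ q i + 1 ∧ cnt B (q i) = cnt B (p i)) : x = 0 := by
  have hpq : ∀ᶠ i in l, p i ≤ q i + 1 := hgap.mono fun i hi => by
    have : (p i : ℝ) ≤ q i + 1 := by nlinarith [hi.1, (p i).cast_nonneg (α := ℝ)]
    exact_mod_cast this
  have hq : Tendsto q l atTop := tendsto_atTop.2 fun b =>
    ((tendsto_atTop.1 hp (b + 1)).and hpq).mono fun i hi => by omega
  have hlow : Tendsto (fun i => cnt B (q i) / q i * (c - (p i : ℝ)⁻¹)) l (𝓝 (x * (c - 0))) :=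
    (hB.comp hq).mul (tendsto_const_nhds.sub
      (tendsto_inv_atTop_zero.comp (tendsto_natCast_atTop_atTop.comp hp)))
  have hcmp : ∀ᶠ i in l, cnt B (q i) / q i * (c - (p i : ℝ)⁻¹) ≤ cnt B (p i) / p i := by
    filter_upwards [hgap, hp.eventually_gt_atTop 0, hq.eventually_gt_atTop 0]
      with i ⟨hcq, heq⟩ hp0 hq0
    have hpR : (0 : ℝ) < p i := by exact_mod_cast hp0
    have hqR : (0 : ℝ) < q i := by exact_mod_cast hq0
    have hdens : 0 ≤ cnt B (q i) / q i := div_nonneg (cnt_nonneg B _) hqR.le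
    calc cnt B (q i) / q i * (c - (p i : ℝ)⁻¹)
        = cnt B (q i) / q i * (c * p i - 1) / p i := by field_simp
      _ ≤ cnt B (q i) / q i * q i / p i := by gcongr; linarith
      _ = cnt B (p i) / p i := by rw [div_mul_cancel₀ _ hqR.ne', heq]
  have hle : x * (c - 0) ≤ x := le_of_tendsto_of_tendsto hlow (hB.comp hp) hcmp
  nlinarith [hB.nonneg]

lemma lld_eq_zero_of_forall_hasDens {A : Set ℕ} (h : ∀ B ⊆ A, ∀ x : ℝ, HasDens B x → x = 0) :
    lld A = 0 := by
  have hset : {x : ℝ | ∃ B ⊆ A, HasDens B x} = {0} := by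
    ext x
    constructor
    · rintro ⟨B, hBA, hx⟩
      exact h B hBA x hx
    · rintro rfl
      exact ⟨∅, Set.empty_subset A, hasDens_empty⟩
  rw [lld, hset, csSup_singleton]

theorem stmt_19 (A : Set ℕ) (a : ℕ → ℕ) (ha : StrictMono a)
    (hrange : Set.range a = A)
    (hgap : 1 < Filter.limsup (fun n => (a (n + 1) : ℝ) / a n) Filter.atTop) :
    lld A = 0 ∧ ∀ B ⊆ A, ∀ x : ℝ, HasDens B x → x = 0 := by
  suffices key : ∀ B ⊆ A, ∀ x : ℝ, HasDens B x → x = 0 from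
    ⟨lld_eq_zero_of_forall_hasDens key, key⟩
  intro B hBA x hx
  obtain ⟨c, hc, hc_lt⟩ := exists_between hgap
  have hfreq : ∃ᶠ n in atTop, c < (a (n + 1) : ℝ) / a n :=
    frequently_lt_of_lt_limsup (isCoboundedUnder_le_of_le atTop fun n => by positivity) hc_lt
  have := frequently_iff_neBot.1 hfreq
  refine hx.eq_zero_of_gaps (l := atTop ⊓ 𝓟 {n | c < (a (n + 1) : ℝ) / a n}) hc
    (q := fun n => a (n + 1) - 1)
    (ha.tendsto_atTop.mono_left inf_le_left) (eventually_inf_principal.2 ?_)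
  filter_upwards [eventually_gt_atTop 0] with n hn hcn
  have hlt : a n < a (n + 1) := ha n.lt_succ_self
  refine ⟨?_, cnt_eq_of_forall_notMem (by omega) ?_⟩
  · have hpos : (0 : ℝ) < a n := by exact_mod_cast (Nat.zero_le _).trans_lt (ha hn)
    rw [lt_div_iff₀ hpos] at hcn
    rw [Nat.cast_sub (by omega)]
    push_cast
    linarith
  · rintro k hk hk' hkB
    obtain ⟨j, rfl⟩ := hrange ▸ hBA hkB
    have := ha.lt_iff_lt.1 hk
    have := ha.lt_iff_lt.1 (show a j < a (n + 1) by omega)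
    omega
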